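/- Let p : E → X be a covering map, e₀ ∈ E, x₀ = p(e₀), and let f : Y → X be a continuous map from a topological space Y with f(y₀) = x₀ for a basepoint y₀ ∈ Y. Then the image of f_* : π₁(Y, y₀) → π₁(X, x₀) is contained in the image of p_* : π₁(E, e₀) → π₁(X, x₀) if and only if for every loop γ in Y based at y₀, the unique lift of the loop f ∘ γ to E starting at e₀ ends at e₀. -/

import Mathlib

open CategoryTheory

/-- The group homomorphism `f⁎ : π₁(Y, y₀) →* π₁(X, x₀)` induced on fundamental groups by a
continuous map `f : Y → X` with `f y₀ = x₀`. -/
noncomputable def FundamentalGroup.inducedHom {Y X : Type u} [TopologicalSpace Y]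
    [TopologicalSpace X] (f : C(Y, X)) (y₀ : Y) (x₀ : X) (hf : f y₀ = x₀) :
    Aut (FundamentalGroupoid.mk y₀ : FundamentalGroupoid Y) →*
      Aut (FundamentalGroupoid.mk x₀ : FundamentalGroupoid X) :=
  let F : TopCat.of Y ⟶ TopCat.of X := TopCat.ofHom f
  let Φ : FundamentalGroupoid (TopCat.of Y) ⥤ FundamentalGroupoid (TopCat.of X) :=
    FundamentalGroupoid.fundamentalGroupoidFunctor.map F
  have hobj : Φ.obj ⟨y₀⟩ = (⟨x₀⟩ : FundamentalGroupoid (TopCat.of X)) := by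
    subst hf; rfl
  ((CategoryTheory.eqToIso hobj).conjAut.toMonoidHom).comp
    (CategoryTheory.Functor.mapAut ⟨y₀⟩ Φ)

/-- The element of the fundamental group `π₁(X, x)` determined by a loop based at `x`. -/
noncomputable def FundamentalGroup.fromLoop {X : Type u} [TopologicalSpace X] {x : X}
    (α : Path x x) : Aut (FundamentalGroupoid.mk x : FundamentalGroupoid X) :=
  (Groupoid.isoEquivHom _ _).symm
    (FundamentalGroup.fromPath (X := TopCat.of X) (Quotient.mk (Path.Homotopic.setoid x x) α))

/-!
A class in the image of `f⁎` is represented by `f ∘ γ` for a loop `γ` at `y₀`; it lies in the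
image of `p⁎` iff `f ∘ γ` is homotopic to `p ∘ δ` for a loop `δ` at `e₀`. Since lifts from `e₀` of
homotopic paths end at the same point, the lift of `f ∘ γ` then ends where `δ` does, at `e₀`.
Conversely a lift `δ` of `f ∘ γ` that is a loop at `e₀` gives `p⁎ [δ] = f⁎ [γ]` on the nose.
-/

namespace FundamentalGroup

universe u

variable {X : Type u} [TopologicalSpace X] {x : X}

theorem fromLoop_surjective : Function.Surjective (fromLoop (x := x)) := fun g => by
  obtain ⟨γ, hγ⟩ := Quotient.exists_rep (toPath (X := TopCat.of X) g.hom)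
  exact ⟨γ, Iso.ext hγ⟩

theorem fromLoop_eq_fromLoop_iff {α β : Path x x} : fromLoop α = fromLoop β ↔ α.Homotopic β :=
  ⟨fun h => Quotient.exact (congrArg Iso.hom h), fun h => Iso.ext (Quotient.sound h)⟩

theorem inducedHom_fromLoop {Y : Type u} [TopologicalSpace Y] (f : C(Y, X)) (y₀ : Y)
    (hf : f y₀ = x) (γ : Path y₀ y₀) :
    inducedHom f y₀ x hf (fromLoop γ) = fromLoop ((γ.map f.continuous).cast hf.symm hf.symm) := by
  subst hf
  apply Iso.ext
  show ((eqToIso _).conjAut ((Functor.mapAut _ _) (fromLoop γ))).hom = _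
  rw [Iso.conjAut_hom, Iso.conj_apply, eqToIso.hom, eqToIso.inv]
  exact (Category.id_comp _).trans (Category.comp_id _)

end FundamentalGroup

namespace IsCoveringMap

variable {E X : Type*} [TopologicalSpace E] [TopologicalSpace X] {p : E → X}

theorem exists_loop_lift_of_homotopic (hp : IsCoveringMap p) {e : E} {α : Path (p e) (p e)}
    (δ : Path e e) (h : (δ.map hp.continuous).Homotopic α) :
    ∃ δ' : Path e e, ∀ t, p (δ' t) = α t := by
  have hδ0 : δ.map hp.continuous 0 = p e := congrArg p δ.source
  have hδ : hp.liftPath (δ.map hp.continuous) e hδ0 = δ :=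
    ((hp.eq_liftPath_iff' _).2 ⟨rfl, δ.source⟩).symm
  refine ⟨⟨hp.liftPath α e α.source, hp.liftPath_zero .., ?_⟩,
    congrFun (hp.liftPath_lifts α e α.source)⟩
  calc hp.liftPath α e α.source 1 = hp.liftPath (δ.map hp.continuous) e hδ0 1 :=
        (hp.liftPath_apply_one_eq_of_homotopicRel h e hδ0 α.source).symm
    _ = e := by rw [hδ]; exact δ.target

end IsCoveringMap

/-- The subgroup formulation of the lifting criterion is equivalent to the loop-lifting
formulation: the image of `f⁎ : π₁(Y, y₀) →* π₁(X, x₀)` is contained in the image of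
`p⁎ : π₁(E, e₀) →* π₁(X, x₀)` iff for every loop `γ` in `Y` based at `y₀`, the unique lift
of `f ∘ γ` starting at `e₀` ends at `e₀` (equivalently, `f ∘ γ` lifts to a loop at `e₀`). -/
theorem range_le_range_iff_loops_lift {E X Y : Type u} [TopologicalSpace E] [TopologicalSpace X]
    [TopologicalSpace Y] {p : E → X} (hp : IsCoveringMap p) (e₀ : E) (x₀ : X) (he : p e₀ = x₀)
    (y₀ : Y) (f : C(Y, X)) (hf : f y₀ = x₀) :
    (FundamentalGroup.inducedHom f y₀ x₀ hf).range ≤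
        (FundamentalGroup.inducedHom ⟨p, hp.continuous⟩ e₀ x₀ he).range ↔
      ∀ γ : Path y₀ y₀, ∃ δ : Path e₀ e₀, ∀ t, p (δ t) = f (γ t) := by
  subst he
  open FundamentalGroup in
  constructor
  · intro hle γ
    obtain ⟨gE, hg⟩ := hle ⟨fromLoop γ, rfl⟩
    obtain ⟨δ, rfl⟩ := fromLoop_surjective gE
    rw [inducedHom_fromLoop, inducedHom_fromLoop, fromLoop_eq_fromLoop_iff] at hg
    exact hp.exists_loop_lift_of_homotopic δ hg
  · rintro hlift _ ⟨gY, rfl⟩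
    obtain ⟨γ, rfl⟩ := fromLoop_surjective gY
    obtain ⟨δ, hδ⟩ := hlift γ
    refine ⟨fromLoop δ, ?_⟩
    rw [inducedHom_fromLoop, inducedHom_fromLoop]
    congr 1
    ext t
    exact hδ t
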